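/- arXiv:1811.03143 — 5 statements merged into one kernel-verified Lean document; each statement's English description precedes it below -/
import Mathlib

section
/- Let n ≥ 1, 1 < p < q, and let d > 0. For each m ∈ ℤⁿ let Q_m be the cube ∏ᵢ [mᵢd, (mᵢ+1)d]. Suppose C > 0 is such that ‖u‖_{L^q(Q_m)} ≤ C‖u‖_{W^{1,p}(Q_m)} for all m and all u ∈ W^{1,p}(Q_m). Then for every u ∈ W^{1,p}(ℝⁿ) and every union Ω of such cubes, ‖u‖_{L^q(Ω)}^q ≤ C^p (sup_{m} ‖u‖_{L^q(Q_m)})^{q-p} ‖u‖_{W^{1,p}(ℝⁿ)}^p. -/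
/-!
On a single cube, with `S` the supremum of the local `L^q` norms,
`‖u‖_q^q = ‖u‖_q^{q-p} ‖u‖_q^p ≤ S^{q-p} C^p ‖u‖_{W^{1,p}(Q_m)}^p`;
`S` is finite because every local `W^{1,p}` norm is at most the global one.
The cubes overlap only in null sets, so summing over `m ∈ M` gives the bound on the union.
-/

open MeasureTheory Set

/-- The cube `∏ᵢ [mᵢ d, (mᵢ+1) d]` in `ℝⁿ`. -/
def latticeCube (n : ℕ) (d : ℝ) (m : Fin n → ℤ) : Set (Fin n → ℝ) :=
  univ.pi fun i => Icc ((m i : ℝ) * d) (((m i : ℝ) + 1) * d)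

open Function

lemma aedisjoint_univ_pi_of_aedisjoint {ι : Type*} [Fintype ι] {α : ι → Type*}
    [∀ i, MeasurableSpace (α i)] {μ : ∀ i, Measure (α i)} [∀ i, SigmaFinite (μ i)]
    {s t : ∀ i, Set (α i)} (i : ι) (h : AEDisjoint (μ i) (s i) (t i)) :
    AEDisjoint (Measure.pi μ) (univ.pi s) (univ.pi t) := by
  rw [AEDisjoint, ← pi_inter_distrib, Measure.pi_pi]
  exact Finset.prod_eq_zero (Finset.mem_univ i) h

lemma Real.aedisjoint_Icc_Icc_of_le {a b c e : ℝ} (hbc : b ≤ c) :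
    AEDisjoint volume (Icc a b) (Icc c e) :=
  measure_mono_null (t := Icc c b) (fun _ hx => ⟨hx.2.1, hx.1.2⟩)
    (by rw [Real.volume_Icc, ENNReal.ofReal_eq_zero, sub_nonpos]; exact hbc)

lemma Real.aedisjoint_Icc_intCast_mul {d : ℝ} (hd : 0 < d) {k l : ℤ} (hkl : k ≠ l) :
    AEDisjoint volume (Icc (k * d) ((k + 1) * d)) (Icc (l * d) ((l + 1) * d)) := by
  have adjacent : ∀ {k l : ℤ}, k < l → ((k : ℝ) + 1) * d ≤ l * d := fun hlt =>
    mul_le_mul_of_nonneg_right (by exact_mod_cast hlt) hd.le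
  rcases hkl.lt_or_gt with hlt | hlt
  · exact aedisjoint_Icc_Icc_of_le (adjacent hlt)
  · exact (aedisjoint_Icc_Icc_of_le (adjacent hlt)).symm

lemma measurableSet_latticeCube (n : ℕ) (d : ℝ) (m : Fin n → ℤ) :
    MeasurableSet (latticeCube n d m) :=
  MeasurableSet.univ_pi fun _ => measurableSet_Icc

lemma aedisjoint_latticeCube {n : ℕ} {d : ℝ} (hd : 0 < d) {a b : Fin n → ℤ} (hab : a ≠ b) :
    AEDisjoint volume (latticeCube n d a) (latticeCube n d b) := by
  obtain ⟨i, hi⟩ := ne_iff.mp hab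
  exact aedisjoint_univ_pi_of_aedisjoint i (Real.aedisjoint_Icc_intCast_mul hd hi)

lemma le_biSup_of_bddAbove_range {α ι : Type*} [ConditionallyCompleteLattice α] {f : ι → α}
    (hf : BddAbove (range f)) {s : Set ι} {i : ι} (hi : i ∈ s) : f i ≤ ⨆ j ∈ s, f j :=
  le_ciSup₂ (f := fun j (_ : j ∈ s) => f j)
    (hf.mono <| iUnion_subset fun _ => range_subset_iff.2 fun _ => mem_range_self _) i hi

lemma le_rpow_mul_rpow_sub_mul_of_rpow_one_div_le {a b C S p q : ℝ} (ha : 0 ≤ a) (hb : 0 ≤ b)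
    (hC : 0 ≤ C) (hp : 0 < p) (hpq : p ≤ q) (haS : a ^ (1 / q) ≤ S)
    (hab : a ^ (1 / q) ≤ C * b ^ (1 / p)) :
    a ≤ C ^ p * S ^ (q - p) * b := by
  set t := a ^ (1 / q) with ht_def
  have ht : 0 ≤ t := by positivity
  have hq : q ≠ 0 := by linarith
  calc a = t ^ (q - p) * t ^ p := by
        rw [← Real.rpow_add' ht (by rwa [sub_add_cancel]), sub_add_cancel, ht_def, one_div,
          Real.rpow_inv_rpow ha hq]
    _ ≤ S ^ (q - p) * (C * b ^ (1 / p)) ^ p :=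
        mul_le_mul (Real.rpow_le_rpow ht haS (sub_nonneg.2 hpq)) (Real.rpow_le_rpow ht hab hp.le)
          (by positivity) (Real.rpow_nonneg (ht.trans haS) _)
    _ = C ^ p * S ^ (q - p) * b := by
        rw [Real.mul_rpow hC (by positivity), one_div, Real.rpow_inv_rpow hb hp.ne']
        ring

lemma setIntegral_iUnion_le_mul_integral {α ι : Type*} [MeasurableSpace α] [Countable ι]
    {μ : Measure α} {s : ι → Set α} (hs : ∀ i, NullMeasurableSet (s i) μ)
    (hdisj : Pairwise (AEDisjoint μ on s)) {f g : α → ℝ} (hf : Integrable f μ)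
    (hg : Integrable g μ) (hg0 : 0 ≤ᵐ[μ] g) {K : ℝ} (hK : 0 ≤ K)
    (hfg : ∀ i, ∫ x in s i, f x ∂μ ≤ K * ∫ x in s i, g x ∂μ) :
    ∫ x in ⋃ i, s i, f x ∂μ ≤ K * ∫ x, g x ∂μ := by
  have hf_sum := hasSum_integral_iUnion_ae hs hdisj hf.integrableOn
  have hg_sum := hasSum_integral_iUnion_ae hs hdisj hg.integrableOn
  calc ∫ x in ⋃ i, s i, f x ∂μ ≤ K * ∫ x in ⋃ i, s i, g x ∂μ :=
        hasSum_le hfg hf_sum (hg_sum.mul_left K)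
    _ ≤ K * ∫ x, g x ∂μ :=
        mul_le_mul_of_nonneg_left (setIntegral_le_integral hg hg0) hK

theorem lq_bound_on_cube_union_general
    (n : ℕ) (p q : ℝ) (hp : 1 < p) (hpq : p < q)
    (d : ℝ) (hd : 0 < d) (C : ℝ) (hC : 0 < C)
    (hSob : ∀ (m : Fin n → ℤ) (u : (Fin n → ℝ) → ℝ),
      DifferentiableOn ℝ u (latticeCube n d m) →
      IntegrableOn (fun x => ‖fderiv ℝ u x‖ ^ p + |u x| ^ p) (latticeCube n d m) →
      IntegrableOn (fun x => |u x| ^ q) (latticeCube n d m) →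
      (∫ x in latticeCube n d m, |u x| ^ q) ^ (1 / q)
        ≤ C * (∫ x in latticeCube n d m, (‖fderiv ℝ u x‖ ^ p + |u x| ^ p)) ^ (1 / p))
    (u : (Fin n → ℝ) → ℝ)
    (hu_diff : Differentiable ℝ u)
    (hu_W : Integrable (fun x => ‖fderiv ℝ u x‖ ^ p + |u x| ^ p))
    (hu_Lq : Integrable (fun x => |u x| ^ q))
    (M : Set (Fin n → ℤ)) :
    (∫ x in ⋃ m ∈ M, latticeCube n d m, |u x| ^ q)
      ≤ C ^ p * (⨆ m ∈ M, (∫ x in latticeCube n d m, |u x| ^ q) ^ (1 / q)) ^ (q - p)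
          * (∫ x, (‖fderiv ℝ u x‖ ^ p + |u x| ^ p)) := by
  have hW0 : ∀ x, 0 ≤ ‖fderiv ℝ u x‖ ^ p + |u x| ^ p := fun x => by positivity
  have hcube : ∀ m, (∫ x in latticeCube n d m, |u x| ^ q) ^ (1 / q)
      ≤ C * (∫ x in latticeCube n d m, (‖fderiv ℝ u x‖ ^ p + |u x| ^ p)) ^ (1 / p) := fun m =>
    hSob m u hu_diff.differentiableOn hu_W.integrableOn hu_Lq.integrableOn
  have hbdd : BddAbove (range fun m => (∫ x in latticeCube n d m, |u x| ^ q) ^ (1 / q)) :=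
    ⟨C * (∫ x, (‖fderiv ℝ u x‖ ^ p + |u x| ^ p)) ^ (1 / p), forall_mem_range.2 fun m =>
      (hcube m).trans <| mul_le_mul_of_nonneg_left (Real.rpow_le_rpow
        (setIntegral_nonneg (measurableSet_latticeCube n d m) fun x _ => hW0 x)
        (setIntegral_le_integral hu_W (ae_of_all _ hW0)) (by positivity)) hC.le⟩
  have hsup0 : 0 ≤ ⨆ m ∈ M, (∫ x in latticeCube n d m, |u x| ^ q) ^ (1 / q) :=
    Real.iSup_nonneg fun _ => Real.iSup_nonneg fun _ => by positivity
  rw [biUnion_eq_iUnion]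
  refine setIntegral_iUnion_le_mul_integral (s := fun m : M => latticeCube n d m)
    (fun m => (measurableSet_latticeCube n d m).nullMeasurableSet)
    (fun m m' h => aedisjoint_latticeCube hd (Subtype.coe_injective.ne h)) hu_Lq hu_W
    (ae_of_all _ hW0) (by positivity) fun m => ?_
  exact le_rpow_mul_rpow_sub_mul_of_rpow_one_div_le
    (setIntegral_nonneg (measurableSet_latticeCube n d m) fun x _ => by positivity)
    (setIntegral_nonneg (measurableSet_latticeCube n d m) fun x _ => hW0 x) hC.le
    (by linarith) hpq.le (le_biSup_of_bddAbove_range hbdd m.2) (hcube m)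

/-- Summing the Sobolev inequality over lattice cubes: if
`‖u‖_{L^q(Q_m)} ≤ C ‖u‖_{W^{1,p}(Q_m)}` for all cubes `Q_m` and all `u ∈ W^{1,p}(Q_m)`,
then for every `u ∈ W^{1,p}(ℝⁿ)` and every union `Ω` of such cubes,
`‖u‖_{L^q(Ω)}^q ≤ C^p (sup_m ‖u‖_{L^q(Q_m)})^{q-p} ‖u‖_{W^{1,p}(ℝⁿ)}^p`. -/
theorem lq_bound_on_cube_union
    (n : ℕ) (hn : 1 ≤ n) (p q : ℝ) (hp : 1 < p) (hpq : p < q)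
    (d : ℝ) (hd : 0 < d) (C : ℝ) (hC : 0 < C)
    (hSob : ∀ (m : Fin n → ℤ) (u : (Fin n → ℝ) → ℝ),
      DifferentiableOn ℝ u (latticeCube n d m) →
      IntegrableOn (fun x => ‖fderiv ℝ u x‖ ^ p + |u x| ^ p) (latticeCube n d m) →
      IntegrableOn (fun x => |u x| ^ q) (latticeCube n d m) →
      (∫ x in latticeCube n d m, |u x| ^ q) ^ (1 / q)
        ≤ C * (∫ x in latticeCube n d m, (‖fderiv ℝ u x‖ ^ p + |u x| ^ p)) ^ (1 / p))
    (u : (Fin n → ℝ) → ℝ)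
    (hu_diff : Differentiable ℝ u)
    (hu_W : Integrable (fun x => ‖fderiv ℝ u x‖ ^ p + |u x| ^ p))
    (hu_Lq : Integrable (fun x => |u x| ^ q))
    (M : Set (Fin n → ℤ)) :
    (∫ x in ⋃ m ∈ M, latticeCube n d m, |u x| ^ q)
      ≤ C ^ p * (⨆ m ∈ M, (∫ x in latticeCube n d m, |u x| ^ q) ^ (1 / q)) ^ (q - p)
          * (∫ x, (‖fderiv ℝ u x‖ ^ p + |u x| ^ p)) :=
  lq_bound_on_cube_union_general n p q hp hpq d hd C hC hSob u hu_diff hu_W hu_Lq M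
end

section
/- Let 1 < p < q < p* (where p* = np/(n−p) if p < n and p* = ∞ otherwise). Suppose (u_j) is a sequence bounded in W^{1,p}(ℝⁿ), ω ⊆ ℝⁿ is open, and there exists ρ > 0 such that sup_{x ∈ ω} ∫_{B(x,ρ)} |u_j|^q dx → 0 as j → ∞. Then ∫_ω |u_j|^q dx → 0 as j → ∞. -/
/-!
Fix `θ = 1 - p / q ∈ (0, 1)`. Cutting `u` off near a ball and applying the
Gagliardo–Nirenberg–Sobolev inequality for differentiable compactly supported functions
(in dimension one, the bound `|v| ≤ ∫ |v'|`) gives the local estimate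
`∫_{B(x, ρ/2)} |u|^q ≤ C (∫_{B(x, ρ)} |∇u|^p + |u|^p)^{q/p}`, uniformly in `x` and `u`.
For every `x`, the mass `t` of `|u_j|^q` on `B(x, ρ/2) ∩ ω` is also at most
`δ_j = sup_{y ∈ ω} ∫_{B(y, ρ)} |u_j|^q`, as `B(x, ρ/2) ⊆ B(y, ρ)` for any `y` in the
intersection; hence `t = t^θ t^{p/q} ≤ δ_j^θ C^{p/q} ∫_{B(x, ρ)} (|∇u_j|^p + |u_j|^p)`.
Integrating this over all centres `x` (Tonelli) turns the left side into a multiple of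
`∫_ω |u_j|^q` and the right side into a multiple of the `W^{1,p}` energy, so
`∫_ω |u_j|^q ≤ K δ_j^θ → 0`.
-/

open MeasureTheory Set Filter Metric
open scoped ENNReal Topology

namespace ENNReal

lemma le_rpow_mul_rpow_of_le_of_le {t a b : ℝ≥0∞} {s : ℝ} (hs0 : 0 ≤ s) (hs1 : s ≤ 1)
    (ha : t ≤ a) (hb : t ≤ b) : t ≤ a ^ (1 - s) * b ^ s :=
  calc t = t ^ (1 - s) * t ^ s := by
        rw [← rpow_add_of_nonneg _ _ (sub_nonneg.2 hs1) hs0, sub_add_cancel, rpow_one]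
    _ ≤ a ^ (1 - s) * b ^ s := by gcongr

lemma rpow_sub_le_of_rpow_le_mul_rpow {A C : ℝ≥0∞} {a b : ℝ} (h0 : A ≠ 0) (htop : A ≠ ⊤)
    (h : A ^ a ≤ C * A ^ b) : A ^ (a - b) ≤ C := by
  rwa [rpow_sub _ _ h0 htop, ENNReal.div_le_iff (rpow_pos (pos_iff_ne_zero.2 h0) htop).ne'
    (rpow_ne_top_of_ne_zero h0 htop)]

lemma add_mul_rpow_le {a b L : ℝ≥0∞} {p : ℝ} (hp : 0 ≤ p) :
    (a + L * b) ^ p ≤ 2 ^ p * (1 + L ^ p) * (a ^ p + b ^ p) :=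
  calc (a + L * b) ^ p ≤ 2 ^ p * (a ^ p + L ^ p * b ^ p) := by
        rw [← mul_rpow_of_nonneg _ _ hp]
        exact add_rpow_le_two_rpow_mul_rpow_add_rpow _ _ hp
    _ ≤ 2 ^ p * (1 + L ^ p) * (a ^ p + b ^ p) := by
        rw [mul_assoc, add_mul, one_mul, mul_add, mul_add]
        gcongr
        · exact le_self_add
        · exact le_add_self

end ENNReal

lemma lintegral_rpow_le_lintegral_rpow_mul_measure_univ {α : Type*} [MeasurableSpace α]
    (μ : Measure α) {f : α → ℝ≥0∞} (hf : AEMeasurable f μ) {r t : ℝ} (hr : 0 < r)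
    (hrt : r ≤ t) :
    ∫⁻ x, f x ^ r ∂μ ≤ (∫⁻ x, f x ^ t ∂μ) ^ (r / t) * μ univ ^ (1 - r / t) := by
  have ht : 0 < t := hr.trans_le hrt
  have h := eLpNorm'_le_eLpNorm'_mul_rpow_measure_univ hr hrt hf.aestronglyMeasurable
  simp only [eLpNorm'_eq_lintegral_enorm, enorm_eq_self] at h
  calc ∫⁻ x, f x ^ r ∂μ = ((∫⁻ x, f x ^ r ∂μ) ^ (1 / r)) ^ r := by
        rw [← ENNReal.rpow_mul, one_div_mul_cancel hr.ne', ENNReal.rpow_one]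
    _ ≤ ((∫⁻ x, f x ^ t ∂μ) ^ (1 / t) * μ univ ^ (1 / r - 1 / t)) ^ r := by gcongr
    _ = (∫⁻ x, f x ^ t ∂μ) ^ (r / t) * μ univ ^ (1 - r / t) := by
        rw [ENNReal.mul_rpow_of_nonneg _ _ hr.le, ← ENNReal.rpow_mul, ← ENNReal.rpow_mul]
        congr 2 <;> field_simp

section GagliardoNirenbergSobolev

open Function

local prefix:max "#" => Fintype.card

variable {ι F : Type*} [Fintype ι] [NormedAddCommGroup F] [NormedSpace ℝ F] [CompleteSpace F]

lemma HasCompactSupport.enorm_le_lintegral_Iic_deriv_of_differentiable {f : ℝ → F}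
    (hf : Differentiable ℝ f) (h2f : HasCompactSupport f) (x : ℝ) :
    ‖f x‖ₑ ≤ ∫⁻ y in Iic x, ‖deriv f y‖ₑ := by
  by_cases hfin : ∫⁻ y in Iic x, ‖deriv f y‖ₑ = ⊤
  · simp [hfin]
  have hint : IntegrableOn (deriv f) (Iic x) :=
    ⟨aestronglyMeasurable_deriv f _, lt_top_iff_ne_top.2 hfin⟩
  have hlim : Tendsto f atBot (𝓝 0) := by
    rw [hasCompactSupport_iff_eventuallyEq, coclosedCompact_eq_cocompact] at h2f
    exact (h2f.filter_mono atBot_le_cocompact).tendsto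
  calc ‖f x‖ₑ = ‖∫ y in Iic x, deriv f y‖ₑ := by
        rw [integral_Iic_of_hasDerivAt_of_tendsto' (fun y _ ↦ (hf y).hasDerivAt) hint hlim,
          sub_zero]
    _ ≤ ∫⁻ y in Iic x, ‖deriv f y‖ₑ := enorm_integral_le_lintegral_enorm _

lemma HasCompactSupport.enorm_le_lintegral_enorm_fderiv_update [DecidableEq ι]
    {u : (ι → ℝ) → F} (hu : Differentiable ℝ u) (h2u : HasCompactSupport u) (x : ι → ℝ)
    (i : ι) : ‖u x‖ₑ ≤ ∫⁻ t, ‖fderiv ℝ u (update x i t)‖ₑ := by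
  have hline : Differentiable ℝ (u ∘ update x i) :=
    fun t ↦ (hu _).comp t (hasDerivAt_update x i t).differentiableAt
  have h2line := h2u.comp_isClosedEmbedding (isClosedEmbedding_update x i)
  calc ‖u x‖ₑ = ‖(u ∘ update x i) (x i)‖ₑ := by simp
    _ ≤ ∫⁻ t in Iic (x i), ‖deriv (u ∘ update x i) t‖ₑ :=
        h2line.enorm_le_lintegral_Iic_deriv_of_differentiable hline _
    _ ≤ ∫⁻ t, ‖deriv (u ∘ update x i) t‖ₑ := setLIntegral_le_lintegral _ _
    _ ≤ ∫⁻ t, ‖fderiv ℝ u (update x i t)‖ₑ := by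
        gcongr with t
        rw [fderiv_comp_deriv _ (hu _) (hasDerivAt_update x i t).differentiableAt]
        refine (ContinuousLinearMap.le_opENorm _ _).trans ?_
        simp [deriv_update, Pi.enorm_single]

theorem lintegral_pow_le_pow_lintegral_fderiv_of_differentiable {p : ℝ}
    (hp : Real.HolderConjugate #ι p) {u : (ι → ℝ) → F} (hu : Differentiable ℝ u)
    (h2u : HasCompactSupport u) :
    ∫⁻ x, ‖u x‖ₑ ^ p ≤ (∫⁻ x, ‖fderiv ℝ u x‖ₑ) ^ p := by
  classical
  have hn : (0 : ℝ) < #ι - 1 := by linarith [hp.lt]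
  calc ∫⁻ x, ‖u x‖ₑ ^ p = ∫⁻ x, ∏ _i : ι, ‖u x‖ₑ ^ (1 / (#ι - 1 : ℝ)) := by
        refine lintegral_congr fun x ↦ ?_
        rw [Finset.prod_const, Finset.card_univ, ← ENNReal.rpow_natCast, ← ENNReal.rpow_mul,
          hp.conjugate_eq]
        field_simp
    _ ≤ ∫⁻ x, ∏ i, (∫⁻ t, ‖fderiv ℝ u (update x i t)‖ₑ) ^ (1 / (#ι - 1 : ℝ)) := by
        gcongr with x i
        exact h2u.enorm_le_lintegral_enorm_fderiv_update hu x i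
    _ ≤ (∫⁻ x, ‖fderiv ℝ u x‖ₑ) ^ p :=
        lintegral_prod_lintegral_pow_le _ hp (measurable_fderiv ℝ u).enorm

theorem enorm_le_lintegral_enorm_fderiv_of_card_eq_one (hι : #ι = 1) {u : (ι → ℝ) → F}
    (hu : Differentiable ℝ u) (h2u : HasCompactSupport u) (x : ι → ℝ) :
    ‖u x‖ₑ ≤ ∫⁻ y, ‖fderiv ℝ u y‖ₑ := by
  classical
  obtain ⟨i, hi⟩ := Fintype.card_eq_one_iff.1 hι
  have huniv : (Finset.univ : Finset ι) = {i} :=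
    Finset.eq_singleton_iff_unique_mem.2 ⟨Finset.mem_univ _, fun j _ ↦ hi j⟩
  calc ‖u x‖ₑ ≤ ∫⁻ t, ‖fderiv ℝ u (update x i t)‖ₑ :=
        h2u.enorm_le_lintegral_enorm_fderiv_update hu x i
    _ = ∫⁻ y, ‖fderiv ℝ u y‖ₑ := by
        rw [← congrFun (lmarginal_singleton (μ := fun _ : ι ↦ (volume : Measure ℝ))
          (fun y ↦ ‖fderiv ℝ u y‖ₑ) i) x, ← huniv, lmarginal_univ]
        rfl

end GagliardoNirenbergSobolev

section SobolevInequality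

local prefix:max "#" => Fintype.card

variable {F : Type*} [NormedAddCommGroup F] [InnerProductSpace ℝ F] [CompleteSpace F]

lemma lintegral_enorm_fderiv_norm_rpow_le {E : Type*} [NormedAddCommGroup E] [NormedSpace ℝ E]
    [MeasurableSpace E] [OpensMeasurableSpace E] (μ : Measure E) {u : E → F}
    (hu : Differentiable ℝ u) {γ : ℝ} (hγ : 1 < γ) {r s : ℝ} (hrs : r.HolderConjugate s) :
    ∫⁻ x, ‖fderiv ℝ (fun x ↦ ‖u x‖ ^ γ) x‖ₑ ∂μ ≤
      ENNReal.ofReal γ * ((∫⁻ x, ‖u x‖ₑ ^ ((γ - 1) * s) ∂μ) ^ (1 / s) *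
        (∫⁻ x, ‖fderiv ℝ u x‖ₑ ^ r ∂μ) ^ (1 / r)) := by
  have hchain : ∀ x, ‖fderiv ℝ (fun x ↦ ‖u x‖ ^ γ) x‖ₑ ≤
      ENNReal.ofReal γ * (‖u x‖ₑ ^ (γ - 1) * ‖fderiv ℝ u x‖ₑ) := fun x ↦
    calc ‖fderiv ℝ (fun x ↦ ‖u x‖ ^ γ) x‖ₑ = ENNReal.ofReal ‖fderiv ℝ (fun x ↦ ‖u x‖ ^ γ) x‖ :=
          (ofReal_norm _).symm
      _ ≤ ENNReal.ofReal (γ * ‖u x‖ ^ (γ - 1) * ‖fderiv ℝ u x‖) :=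
          ENNReal.ofReal_le_ofReal (norm_fderiv_norm_rpow_le hu hγ)
      _ = ENNReal.ofReal γ * (‖u x‖ₑ ^ (γ - 1) * ‖fderiv ℝ u x‖ₑ) := by
          rw [ENNReal.ofReal_mul (by positivity), ENNReal.ofReal_mul (by positivity), ofReal_norm,
            ← ENNReal.ofReal_rpow_of_nonneg (norm_nonneg _) (by linarith), ofReal_norm, mul_assoc]
  calc ∫⁻ x, ‖fderiv ℝ (fun x ↦ ‖u x‖ ^ γ) x‖ₑ ∂μ
      ≤ ∫⁻ x, ENNReal.ofReal γ * (‖u x‖ₑ ^ (γ - 1) * ‖fderiv ℝ u x‖ₑ) ∂μ := lintegral_mono hchain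
    _ = ENNReal.ofReal γ * ∫⁻ x, ‖u x‖ₑ ^ (γ - 1) * ‖fderiv ℝ u x‖ₑ ∂μ :=
        lintegral_const_mul' _ _ ENNReal.ofReal_ne_top
    _ ≤ _ := by
        gcongr
        refine (ENNReal.lintegral_mul_le_Lp_mul_Lq μ hrs.symm ?_ ?_).trans_eq ?_
        · exact (hu.continuous.enorm.measurable.pow_const _).aemeasurable
        · exact (measurable_fderiv ℝ u).enorm.aemeasurable
        · simp_rw [← ENNReal.rpow_mul]

variable {ι : Type*} [Fintype ι]

/-- The case `r = 1` of the Sobolev inequality applied to `‖u‖ ^ γ`, combined with Hölder. -/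
lemma rpow_lintegral_enorm_rpow_le_of_holderConjugate (hι : 1 < #ι) {γ : ℝ} (hγ : 1 < γ)
    {r s : ℝ} (hrs : r.HolderConjugate s) {u : (ι → ℝ) → F} (hu : Differentiable ℝ u)
    (h2u : HasCompactSupport u) :
    (∫⁻ x, ‖u x‖ₑ ^ (γ * (#ι / (#ι - 1)))) ^ ((#ι - 1) / #ι : ℝ) ≤
      ENNReal.ofReal γ * ((∫⁻ x, ‖u x‖ₑ ^ ((γ - 1) * s)) ^ (1 / s) *
        (∫⁻ x, ‖fderiv ℝ u x‖ₑ ^ r) ^ (1 / r)) := by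
  have hN : (1 : ℝ) < #ι := by exact_mod_cast hι
  have hw := lintegral_pow_le_pow_lintegral_fderiv_of_differentiable
    (Real.HolderConjugate.conjExponent hN) (hu.norm_rpow hγ) (h2u.norm.rpow_const (by linarith))
  simp_rw [Real.enorm_rpow_of_nonneg (norm_nonneg _) (by linarith : (0 : ℝ) ≤ γ), enorm_norm,
    ← ENNReal.rpow_mul, Real.conjExponent] at hw
  calc (∫⁻ x, ‖u x‖ₑ ^ (γ * (#ι / (#ι - 1)))) ^ ((#ι - 1) / #ι : ℝ)
      ≤ ((∫⁻ x, ‖fderiv ℝ (fun x ↦ ‖u x‖ ^ γ) x‖ₑ) ^ (#ι / (#ι - 1) : ℝ)) ^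
          ((#ι - 1) / #ι : ℝ) := by
        gcongr
    _ = ∫⁻ x, ‖fderiv ℝ (fun x ↦ ‖u x‖ ^ γ) x‖ₑ := by
        rw [← ENNReal.rpow_mul, div_mul_div_cancel₀' (by linarith), div_self (by linarith),
          ENNReal.rpow_one]
    _ ≤ _ := lintegral_enorm_fderiv_norm_rpow_le volume hu hγ hrs

theorem lintegral_rpow_le_lintegral_fderiv_rpow_of_differentiable {r : ℝ} (hr : 1 < r)
    (hrn : r < #ι) {u : (ι → ℝ) → F} (hu : Differentiable ℝ u) (h2u : HasCompactSupport u) :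
    ∫⁻ x, ‖u x‖ₑ ^ (#ι * r / (#ι - r)) ≤
      ENNReal.ofReal (r * (#ι - 1) / (#ι - r)) ^ (#ι * r / (#ι - r)) *
        (∫⁻ x, ‖fderiv ℝ u x‖ₑ ^ r) ^ (#ι / (#ι - r)) := by
  have hι : 1 < #ι := by exact_mod_cast hr.trans hrn
  set N : ℝ := (#ι : ℝ)
  have hN : 0 < N := by linarith
  have hNr : 0 < N - r := by linarith
  have hN1 : 0 < N - 1 := by linarith
  have hr1 : 0 < r - 1 := by linarith
  set r' := N * r / (N - r)
  set γ := r * (N - 1) / (N - r)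
  set s := r.conjExponent
  have hr' : 0 < r' := by positivity
  have hγ : 1 < γ := by rw [lt_div_iff₀ hNr]; nlinarith
  -- `γ` is chosen so that both integrals of powers of `‖u‖` below are `∫ ‖u‖ ^ r'`
  have hγN : γ * (N / (N - 1)) = r' := by simp only [γ, r']; field_simp
  have hγs : (γ - 1) * s = r' := by simp only [γ, s, r', Real.conjExponent]; field_simp; ring
  have hexp : 1 / r' = (N - 1) / N - 1 / s := by
    simp only [s, r', Real.conjExponent]; field_simp; ring
  set A := ∫⁻ x, ‖u x‖ₑ ^ r'
  set B := ∫⁻ x, ‖fderiv ℝ u x‖ₑ ^ r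
  obtain hA0 | hA0 := eq_or_ne A 0
  · simp [hA0]
  have hAtop : A ≠ ⊤ := by
    have := lintegral_rpow_enorm_lt_top_of_eLpNorm_lt_top (ENNReal.ofReal_pos.2 hr').ne'
      ENNReal.ofReal_ne_top
      (hu.continuous.memLp_of_hasCompactSupport (μ := volume) h2u).eLpNorm_lt_top
    rw [ENNReal.toReal_ofReal hr'.le] at this
    exact this.ne
  have key : A ^ (1 / r') ≤ ENNReal.ofReal γ * B ^ (1 / r) := by
    have h := rpow_lintegral_enorm_rpow_le_of_holderConjugate hι hγ
      (Real.HolderConjugate.conjExponent hr) hu h2u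
    rw [hγN, hγs] at h
    rw [hexp]
    exact ENNReal.rpow_sub_le_of_rpow_le_mul_rpow hA0 hAtop (h.trans_eq (by ring))
  calc A = (A ^ (1 / r')) ^ r' := by
        rw [← ENNReal.rpow_mul, one_div_mul_cancel hr'.ne', ENNReal.rpow_one]
    _ ≤ (ENNReal.ofReal γ * B ^ (1 / r)) ^ r' := by gcongr
    _ = ENNReal.ofReal γ ^ r' * B ^ (N / (N - r)) := by
        rw [ENNReal.mul_rpow_of_nonneg _ _ hr'.le, ← ENNReal.rpow_mul]
        congr 2
        simp only [r']
        field_simp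

end SobolevInequality

section Cutoff

variable {E F : Type*} [NormedAddCommGroup E] [NormedSpace ℝ E] [NormedAddCommGroup F]
  [NormedSpace ℝ F]

noncomputable def sobolevIntegrand (p : ℝ) (u : E → F) (x : E) : ℝ≥0∞ :=
  ‖fderiv ℝ u x‖ₑ ^ p + ‖u x‖ₑ ^ p

lemma norm_fderiv_smul_le {χ : E → ℝ} {u : E → F} {x : E} (hχ : DifferentiableAt ℝ χ x)
    (hu : DifferentiableAt ℝ u x) (hχ1 : |χ x| ≤ 1) {L : ℝ} (hL : ‖fderiv ℝ χ x‖ ≤ L) :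
    ‖fderiv ℝ (fun y ↦ χ y • u y) x‖ ≤ ‖fderiv ℝ u x‖ + L * ‖u x‖ := by
  rw [fderiv_fun_smul hχ hu]
  refine (norm_add_le _ _).trans (add_le_add ?_ ?_)
  · rw [norm_smul, Real.norm_eq_abs]
    exact mul_le_of_le_one_left (norm_nonneg _) hχ1
  · rw [ContinuousLinearMap.norm_smulRight_apply]
    exact mul_le_mul_of_nonneg_right hL (norm_nonneg _)

variable [FiniteDimensional ℝ E]

lemma exists_cutoff_rpow_fderiv_le {R R' : ℝ} (hR : 0 < R) (hRR' : R < R') {p : ℝ}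
    (hp : 0 ≤ p) :
    ∃ c : ℝ≥0∞, c ≠ ⊤ ∧ ∀ u : E → F, Differentiable ℝ u → ∀ m : E, ∃ v : E → F,
      Differentiable ℝ v ∧ HasCompactSupport v ∧ EqOn v u (closedBall m R) ∧
      tsupport v ⊆ ball m R' ∧ ∀ x, ‖fderiv ℝ v x‖ₑ ^ p ≤ c * sobolevIntegrand p u x := by
  let χ : ContDiffBump (0 : E) := ⟨R, (R + R') / 2, hR, by linarith⟩
  have hχ : Differentiable ℝ χ := (χ.contDiff (n := 1)).differentiable one_ne_zero
  obtain ⟨L, hL⟩ := (χ.hasCompactSupport.fderiv ℝ).exists_bound_of_continuous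
    ((χ.contDiff (n := 1)).continuous_fderiv one_ne_zero)
  have hL0 : 0 ≤ L := (norm_nonneg _).trans (hL 0)
  refine ⟨2 ^ p * (1 + ENNReal.ofReal L ^ p), by finiteness, fun u hu m ↦ ?_⟩
  have hχm : Differentiable ℝ fun x ↦ χ (x - m) := hχ.comp (differentiable_id.sub_const m)
  have hsupp : tsupport (fun x ↦ χ (x - m) • u x) ⊆ closedBall m χ.rOut := by
    refine closure_minimal (fun x hx ↦ ?_) isClosed_closedBall
    have : x - m ∈ Function.support χ :=
      Function.support_smul_subset_left (fun x ↦ χ (x - m)) u hx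
    rw [χ.support_eq, mem_ball, dist_zero_right, ← dist_eq_norm] at this
    exact this.le
  refine ⟨fun x ↦ χ (x - m) • u x, hχm.smul hu, ?_, fun x hx ↦ ?_, ?_, fun x ↦ ?_⟩
  · exact (isCompact_closedBall m χ.rOut).of_isClosed_subset (isClosed_tsupport _) hsupp
  · change χ (x - m) • u x = u x
    rw [χ.one_of_mem_closedBall (by simpa [dist_eq_norm] using hx), one_smul]
  · exact hsupp.trans (closedBall_subset_ball (show (R + R') / 2 < R' by linarith))
  have hnorm := norm_fderiv_smul_le (L := L) (hχm x) (hu x)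
    (abs_le.2 ⟨by linarith [χ.nonneg' (x - m)], χ.le_one⟩) (by rw [fderiv_comp_sub]; exact hL _)
  calc ‖fderiv ℝ (fun x ↦ χ (x - m) • u x) x‖ₑ ^ p
      ≤ (‖fderiv ℝ u x‖ₑ + ENNReal.ofReal L * ‖u x‖ₑ) ^ p := by
        gcongr
        rw [← ofReal_norm, ← ofReal_norm, ← ofReal_norm, ← ENNReal.ofReal_mul hL0,
          ← ENNReal.ofReal_add (norm_nonneg _) (by positivity)]
        exact ENNReal.ofReal_le_ofReal hnorm
    _ ≤ 2 ^ p * (1 + ENNReal.ofReal L ^ p) * sobolevIntegrand p u x :=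
        ENNReal.add_mul_rpow_le hp

end Cutoff

lemma exists_sobolev_exponent {N p q : ℝ} (hN : 2 ≤ N) (hp : 1 < p) (hpq : p < q)
    (hq : p < N → q < N * p / (N - p)) :
    ∃ r, 1 < r ∧ r < N ∧ r ≤ p ∧ q ≤ N * r / (N - r) := by
  by_cases hpN : p < N
  · exact ⟨p, hp, hpN, le_rfl, (hq hpN).le⟩
  -- for `p ≥ N`, take the `r < N` whose Sobolev exponent `N r / (N - r)` is `q + N`
  refine ⟨N * (q + N) / (2 * N + q), ?_, ?_, ?_, ?_⟩
  · rw [lt_div_iff₀ (by linarith)]; nlinarith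
  · rw [div_lt_iff₀ (by linarith)]; nlinarith
  · rw [div_le_iff₀ (by linarith)]; nlinarith
  · have hd : 2 * N + q ≠ 0 := by linarith
    have hN0 : N ≠ 0 := by linarith
    have hsub : N - N * (q + N) / (2 * N + q) = N * N / (2 * N + q) := by
      rw [eq_div_iff hd, sub_mul, div_mul_cancel₀ _ hd]
      ring
    rw [hsub, mul_div_assoc', div_div_div_cancel_right₀ hd, mul_comm, mul_assoc,
      mul_div_mul_left _ _ hN0, mul_div_cancel_right₀ _ hN0]
    linarith

section LocalEstimate

local prefix:max "#" => Fintype.card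

variable {ι F : Type*} [Fintype ι] [NormedAddCommGroup F] [InnerProductSpace ℝ F]
  [CompleteSpace F]

lemma lintegral_ball_rpow_le_of_card_eq_one (hι : #ι = 1) {q : ℝ} (hq : 0 ≤ q)
    {v : (ι → ℝ) → F} (hv : Differentiable ℝ v) (h2v : HasCompactSupport v) (m : ι → ℝ)
    (R : ℝ) :
    ∫⁻ x in ball m R, ‖v x‖ₑ ^ q ≤ volume (ball (0 : ι → ℝ) R) * (∫⁻ x, ‖fderiv ℝ v x‖ₑ) ^ q :=
  calc ∫⁻ x in ball m R, ‖v x‖ₑ ^ q ≤ ∫⁻ x in ball m R, (∫⁻ y, ‖fderiv ℝ v y‖ₑ) ^ q := by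
        gcongr with x
        exact enorm_le_lintegral_enorm_fderiv_of_card_eq_one hι hv h2v x
    _ = volume (ball (0 : ι → ℝ) R) * (∫⁻ x, ‖fderiv ℝ v x‖ₑ) ^ q := by
        rw [setLIntegral_const, Measure.addHaar_ball_center, mul_comm]

lemma lintegral_ball_rpow_le_of_lt_card {r q : ℝ} (hr : 1 < r) (hrn : r < #ι) (hq : 0 < q)
    (hqr : q ≤ #ι * r / (#ι - r)) {v : (ι → ℝ) → F} (hv : Differentiable ℝ v)
    (h2v : HasCompactSupport v) (m : ι → ℝ) (R : ℝ) :
    ∫⁻ x in ball m R, ‖v x‖ₑ ^ q ≤ ENNReal.ofReal (r * (#ι - 1) / (#ι - r)) ^ q *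
      volume (ball (0 : ι → ℝ) R) ^ (1 - q / (#ι * r / (#ι - r))) *
        (∫⁻ x, ‖fderiv ℝ v x‖ₑ ^ r) ^ (q / r) := by
  set N : ℝ := (#ι : ℝ)
  set r' := N * r / (N - r)
  have hNr : 0 < N - r := by linarith
  have hN0 : N ≠ 0 := by linarith
  have hr' : 0 < r' := by positivity
  calc ∫⁻ x in ball m R, ‖v x‖ₑ ^ q
      ≤ (∫⁻ x in ball m R, ‖v x‖ₑ ^ r') ^ (q / r') * volume (ball m R) ^ (1 - q / r') := by
        simpa using lintegral_rpow_le_lintegral_rpow_mul_measure_univ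
          (volume.restrict (ball m R)) hv.continuous.enorm.aemeasurable hq hqr
    _ ≤ (∫⁻ x, ‖v x‖ₑ ^ r') ^ (q / r') * volume (ball (0 : ι → ℝ) R) ^ (1 - q / r') := by
        rw [Measure.addHaar_ball_center]
        gcongr
        exact Measure.restrict_le_self
    _ ≤ (ENNReal.ofReal (r * (N - 1) / (N - r)) ^ r' *
          (∫⁻ x, ‖fderiv ℝ v x‖ₑ ^ r) ^ (N / (N - r))) ^ (q / r') *
          volume (ball (0 : ι → ℝ) R) ^ (1 - q / r') := by
        gcongr
        exact lintegral_rpow_le_lintegral_fderiv_rpow_of_differentiable hr hrn hv h2v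
    _ = _ := by
        rw [ENNReal.mul_rpow_of_nonneg _ _ (by positivity), ← ENNReal.rpow_mul, ← ENNReal.rpow_mul,
          mul_div_cancel₀ _ hr'.ne', show N / (N - r) * (q / r') = q / r by
            simp only [r']; field_simp]
        ring

lemma exists_lintegral_ball_rpow_le_lintegral_fderiv_rpow (hι : 1 ≤ #ι) {p q : ℝ} (hp : 1 < p)
    (hpq : p < q) (hq : p < #ι → q < #ι * p / (#ι - p)) (R : ℝ) :
    ∃ r, 1 ≤ r ∧ r ≤ p ∧ ∃ C : ℝ≥0∞, C ≠ ⊤ ∧ ∀ v : (ι → ℝ) → F, Differentiable ℝ v →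
      HasCompactSupport v → ∀ m, ∫⁻ x in ball m R, ‖v x‖ₑ ^ q ≤
        C * (∫⁻ x, ‖fderiv ℝ v x‖ₑ ^ r) ^ (q / r) := by
  have hq0 : 0 < q := by linarith
  obtain hι | hι := hι.eq_or_lt
  · refine ⟨1, le_rfl, hp.le, volume (ball (0 : ι → ℝ) R), measure_ball_lt_top.ne,
      fun v hv h2v m ↦ ?_⟩
    simpa using lintegral_ball_rpow_le_of_card_eq_one hι.symm hq0.le hv h2v m R
  obtain ⟨r, hr, hrn, hrp, hqr⟩ :=
    exists_sobolev_exponent (N := #ι) (by exact_mod_cast hι) hp hpq hq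
  refine ⟨r, hr.le, hrp, _, ENNReal.mul_ne_top (by finiteness)
    (ENNReal.rpow_ne_top_of_nonneg (sub_nonneg.2 ((div_le_one (by linarith)).2 hqr))
      measure_ball_lt_top.ne), fun v hv h2v m ↦
    lintegral_ball_rpow_le_of_lt_card hr hrn hq0 hqr hv h2v m R⟩

theorem exists_lintegral_ball_rpow_le_sobolevIntegrand (hι : 1 ≤ #ι) {p q : ℝ} (hp : 1 < p)
    (hpq : p < q) (hq : p < #ι → q < #ι * p / (#ι - p)) {R R' : ℝ} (hR : 0 < R)
    (hRR' : R < R') :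
    ∃ C : ℝ≥0∞, C ≠ ⊤ ∧ ∀ u : (ι → ℝ) → F, Differentiable ℝ u → ∀ m,
      ∫⁻ x in ball m R, ‖u x‖ₑ ^ q ≤ C * (∫⁻ x in ball m R', sobolevIntegrand p u x) ^ (q / p) := by
  obtain ⟨r, hr, hrp, C, hC, hsob⟩ :=
    exists_lintegral_ball_rpow_le_lintegral_fderiv_rpow (F := F) hι hp hpq hq R
  obtain ⟨c, hc, hcut⟩ :=
    exists_cutoff_rpow_fderiv_le (E := ι → ℝ) (F := F) hR hRR' (p := p) (by linarith)
  have hr0 : 0 < r := by linarith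
  have hqr : 0 ≤ q / r := (div_pos (by linarith) hr0).le
  set K := c ^ (r / p) * volume (ball (0 : ι → ℝ) R') ^ (1 - r / p)
  have hK : K ≠ ⊤ := ENNReal.mul_ne_top (by finiteness)
    (ENNReal.rpow_ne_top_of_nonneg (sub_nonneg.2 ((div_le_one (by linarith)).2 hrp))
      measure_ball_lt_top.ne)
  refine ⟨C * K ^ (q / r), ENNReal.mul_ne_top hC (ENNReal.rpow_ne_top_of_nonneg hqr hK),
    fun u hu m ↦ ?_⟩
  obtain ⟨v, hv, h2v, hvu, hvR', hDv⟩ := hcut u hu m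
  set S := ∫⁻ x in ball m R', sobolevIntegrand p u x
  have hDvS : ∫⁻ x, ‖fderiv ℝ v x‖ₑ ^ r ≤ K * S ^ (r / p) :=
    calc ∫⁻ x, ‖fderiv ℝ v x‖ₑ ^ r = ∫⁻ x in ball m R', ‖fderiv ℝ v x‖ₑ ^ r := by
          refine (setLIntegral_eq_of_support_subset fun x hx ↦ hvR' ?_).symm
          refine support_fderiv_subset ℝ fun h ↦ hx ?_
          change ‖fderiv ℝ v x‖ₑ ^ r = 0
          rw [h, ← ofReal_norm, norm_zero, ENNReal.ofReal_zero, ENNReal.zero_rpow_of_pos hr0]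
      _ ≤ (∫⁻ x in ball m R', ‖fderiv ℝ v x‖ₑ ^ p) ^ (r / p) *
            volume (ball m R') ^ (1 - r / p) := by
          simpa using lintegral_rpow_le_lintegral_rpow_mul_measure_univ
            (volume.restrict (ball m R')) (measurable_fderiv ℝ v).enorm.aemeasurable hr0 hrp
      _ ≤ (c * S) ^ (r / p) * volume (ball (0 : ι → ℝ) R') ^ (1 - r / p) := by
          rw [Measure.addHaar_ball_center, ← lintegral_const_mul' _ _ hc]
          gcongr with x
          exact hDv x
      _ = K * S ^ (r / p) := by
          rw [ENNReal.mul_rpow_of_nonneg _ _ (by positivity)]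
          ring
  calc ∫⁻ x in ball m R, ‖u x‖ₑ ^ q = ∫⁻ x in ball m R, ‖v x‖ₑ ^ q :=
        setLIntegral_congr_fun measurableSet_ball fun x hx ↦ by
          rw [hvu (ball_subset_closedBall hx)]
    _ ≤ C * (∫⁻ x, ‖fderiv ℝ v x‖ₑ ^ r) ^ (q / r) := hsob v hv h2v m
    _ ≤ C * (K * S ^ (r / p)) ^ (q / r) := by gcongr
    _ = C * K ^ (q / r) * S ^ (q / p) := by
        rw [ENNReal.mul_rpow_of_nonneg _ _ hqr, ← ENNReal.rpow_mul, div_mul_div_cancel₀' hr0.ne']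
        ring

end LocalEstimate

section Averaging

variable {E : Type*} [NormedAddCommGroup E] [NormedSpace ℝ E] [FiniteDimensional ℝ E]
  [MeasurableSpace E] [BorelSpace E]

lemma measurable_uncurry_indicator_ball {f : E → ℝ≥0∞} (hf : Measurable f) (r : ℝ) :
    Measurable (Function.uncurry fun x y ↦ (ball x r).indicator f y) :=
  (hf.comp measurable_snd).indicator
    (measurableSet_lt (measurable_snd.dist measurable_fst) measurable_const)

lemma Measurable.setLIntegral_ball (ν : Measure E) [SFinite ν] {f : E → ℝ≥0∞}
    (hf : Measurable f) (r : ℝ) : Measurable fun x ↦ ∫⁻ y in ball x r, f y ∂ν := by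
  simp_rw [← lintegral_indicator measurableSet_ball]
  exact (measurable_uncurry_indicator_ball hf r).lintegral_prod_right'

variable (μ : Measure E) [μ.IsAddHaarMeasure]

lemma lintegral_setLIntegral_ball (ν : Measure E) [SFinite ν] {f : E → ℝ≥0∞}
    (hf : Measurable f) (r : ℝ) :
    ∫⁻ x, ∫⁻ y in ball x r, f y ∂ν ∂μ = μ (ball 0 r) * ∫⁻ y, f y ∂ν := by
  simp_rw [← lintegral_indicator measurableSet_ball]
  rw [lintegral_lintegral_swap (measurable_uncurry_indicator_ball hf r).aemeasurable,
    ← lintegral_const_mul _ hf]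
  refine lintegral_congr fun y ↦ ?_
  rw [← Measure.addHaar_ball_center μ y, mul_comm, ← lintegral_indicator_const measurableSet_ball]
  congr 1 with x
  simp only [Set.indicator, mem_ball, dist_comm]

variable {μ}

theorem setLIntegral_le_of_forall_ball {f g : E → ℝ≥0∞} (hf : Measurable f) (hg : Measurable g)
    {ω : Set E} {ρ R s : ℝ} {C D : ℝ≥0∞} (hρ : 0 < ρ) (hs0 : 0 < s) (hs1 : s ≤ 1)
    (hsmall : ∀ x ∈ ω, ∫⁻ y in ball x ρ, f y ∂μ ≤ D)
    (hlocal : ∀ x, ∫⁻ y in ball x (ρ / 2), f y ∂μ ≤ C * (∫⁻ y in ball x R, g y ∂μ) ^ s⁻¹) :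
    ∫⁻ x in ω, f x ∂μ ≤
      D ^ (1 - s) * (C ^ s * (μ (ball 0 R) / μ (ball 0 (ρ / 2))) * ∫⁻ x, g x ∂μ) := by
  have hpt : ∀ x, ∫⁻ y in ball x (ρ / 2), f y ∂μ.restrict ω ≤
      D ^ (1 - s) * C ^ s * ∫⁻ y in ball x R, g y ∂μ := by
    intro x
    have hD : ∫⁻ y in ball x (ρ / 2), f y ∂μ.restrict ω ≤ D := by
      rw [Measure.restrict_restrict measurableSet_ball]
      obtain h | ⟨x', hx'B, hx'ω⟩ := (ball x (ρ / 2) ∩ ω).eq_empty_or_nonempty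
      · simp [h]
      refine (lintegral_mono_set fun y hy ↦ ?_).trans (hsmall x' hx'ω)
      rw [mem_ball] at hx'B ⊢
      linarith [dist_triangle_right y x' x, mem_ball.1 hy.1]
    have hC : ∫⁻ y in ball x (ρ / 2), f y ∂μ.restrict ω ≤
        C * (∫⁻ y in ball x R, g y ∂μ) ^ s⁻¹ :=
      (lintegral_mono' (Measure.restrict_mono le_rfl Measure.restrict_le_self) le_rfl).trans
        (hlocal x)
    refine (ENNReal.le_rpow_mul_rpow_of_le_of_le hs0.le hs1 hD hC).trans_eq ?_
    rw [ENNReal.mul_rpow_of_nonneg _ _ hs0.le, ← ENNReal.rpow_mul, inv_mul_cancel₀ hs0.ne',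
      ENNReal.rpow_one, mul_assoc]
  have hmass : μ (ball 0 (ρ / 2)) * ∫⁻ x in ω, f x ∂μ ≤
      D ^ (1 - s) * C ^ s * (μ (ball 0 R) * ∫⁻ x, g x ∂μ) :=
    calc μ (ball 0 (ρ / 2)) * ∫⁻ x in ω, f x ∂μ
        = ∫⁻ x, ∫⁻ y in ball x (ρ / 2), f y ∂μ.restrict ω ∂μ :=
          (lintegral_setLIntegral_ball μ _ hf _).symm
      _ ≤ ∫⁻ x, D ^ (1 - s) * C ^ s * ∫⁻ y in ball x R, g y ∂μ ∂μ := lintegral_mono hpt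
      _ = D ^ (1 - s) * C ^ s * (μ (ball 0 R) * ∫⁻ x, g x ∂μ) := by
          rw [lintegral_const_mul _ (hg.setLIntegral_ball μ R), lintegral_setLIntegral_ball μ μ hg]
  calc ∫⁻ x in ω, f x ∂μ
      ≤ D ^ (1 - s) * C ^ s * (μ (ball 0 R) * ∫⁻ x, g x ∂μ) / μ (ball 0 (ρ / 2)) := by
        rw [ENNReal.le_div_iff_mul_le (Or.inl (measure_ball_pos μ 0 (half_pos hρ)).ne')
          (Or.inl measure_ball_lt_top.ne), mul_comm]
        exact hmass
    _ = D ^ (1 - s) * (C ^ s * (μ (ball 0 R) / μ (ball 0 (ρ / 2))) * ∫⁻ x, g x ∂μ) := by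
        simp only [div_eq_mul_inv]
        ring

end Averaging

section Conversions

lemma ofReal_abs_rpow {q : ℝ} (hq : 0 ≤ q) (t : ℝ) : ENNReal.ofReal (|t| ^ q) = ‖t‖ₑ ^ q := by
  rw [← ENNReal.ofReal_rpow_of_nonneg (abs_nonneg t) hq, Real.enorm_eq_ofReal_abs]

variable {α : Type*} [MeasurableSpace α] {μ : Measure α}

lemma integral_abs_rpow_eq_toReal_lintegral {f : α → ℝ} (hf : AEStronglyMeasurable f μ) {q : ℝ}
    (hq : 0 ≤ q) : ∫ x, |f x| ^ q ∂μ = (∫⁻ x, ‖f x‖ₑ ^ q ∂μ).toReal := by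
  rw [integral_eq_lintegral_of_nonneg_ae (f := fun x ↦ |f x| ^ q)
    (ae_of_all _ fun x ↦ by positivity) (hf.aemeasurable.norm.pow_const q).aestronglyMeasurable]
  simp_rw [ofReal_abs_rpow hq]

lemma setLIntegral_enorm_rpow_le_ofReal_iSup {ι : Type*} {f : α → ℝ}
    (hf : AEStronglyMeasurable f μ) {q : ℝ} (hq : 0 ≤ q) {S : ι → Set α} {B : ℝ≥0∞}
    (hB : B ≠ ⊤) (hSB : ∀ i, ∫⁻ x in S i, ‖f x‖ₑ ^ q ∂μ ≤ B) {s : Set ι} {i : ι} (hi : i ∈ s) :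
    ∫⁻ x in S i, ‖f x‖ₑ ^ q ∂μ ≤ ENNReal.ofReal (⨆ j ∈ s, ∫ x in S j, |f x| ^ q ∂μ) := by
  have heq : ∀ j, ∫ x in S j, |f x| ^ q ∂μ = (∫⁻ x in S j, ‖f x‖ₑ ^ q ∂μ).toReal :=
    fun j ↦ integral_abs_rpow_eq_toReal_lintegral hf.restrict hq
  have hbdd : BddAbove (⋃ j, range fun (_ : j ∈ s) ↦ ∫ x in S j, |f x| ^ q ∂μ) := by
    refine ⟨B.toReal, ?_⟩
    rintro _ ⟨_, ⟨j, rfl⟩, ⟨_, rfl⟩⟩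
    rw [heq]
    exact ENNReal.toReal_mono hB (hSB j)
  rw [← ENNReal.ofReal_toReal (ne_top_of_le_ne_top hB (hSB i)), ← heq]
  exact ENNReal.ofReal_le_ofReal (le_ciSup₂ hbdd i hi)

variable {E : Type*} [NormedAddCommGroup E] [NormedSpace ℝ E] [MeasurableSpace E]

lemma Continuous.measurable_sobolevIntegrand [OpensMeasurableSpace E] {u : E → ℝ}
    (hu : Continuous u) (p : ℝ) : Measurable (sobolevIntegrand p u) :=
  ((measurable_fderiv ℝ u).enorm.pow_const p).add (hu.enorm.measurable.pow_const p)

lemma ofReal_integral_eq_lintegral_sobolevIntegrand {μ : Measure E} {u : E → ℝ} {p : ℝ}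
    (hp : 0 ≤ p) (hu : Integrable (fun x ↦ ‖fderiv ℝ u x‖ ^ p + |u x| ^ p) μ) :
    ENNReal.ofReal (∫ x, ‖fderiv ℝ u x‖ ^ p + |u x| ^ p ∂μ) = ∫⁻ x, sobolevIntegrand p u x ∂μ := by
  rw [ofReal_integral_eq_lintegral_ofReal hu (ae_of_all _ fun x ↦ by positivity)]
  refine lintegral_congr fun x ↦ ?_
  rw [ENNReal.ofReal_add (by positivity) (by positivity), ofReal_abs_rpow hp,
    ← ENNReal.ofReal_rpow_of_nonneg (norm_nonneg _) hp, ofReal_norm, sobolevIntegrand]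

end Conversions

lemma ENNReal.tendsto_zero_of_le_ofReal_rpow_mul {β : Type*} {l : Filter β} {X : β → ℝ≥0∞}
    {δ : β → ℝ} {θ : ℝ} (hθ : 0 < θ) {K : ℝ≥0∞} (hK : K ≠ ⊤) (hδ : Tendsto δ l (𝓝 0))
    (hX : ∀ j, X j ≤ ENNReal.ofReal (δ j) ^ θ * K) : Tendsto X l (𝓝 0) := by
  have h := ((ENNReal.continuous_rpow_const (y := θ)).tendsto _).comp (ENNReal.tendsto_ofReal hδ)
  rw [ENNReal.ofReal_zero, ENNReal.zero_rpow_of_pos hθ] at h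
  refine tendsto_of_tendsto_of_tendsto_of_le_of_le tendsto_const_nhds ?_ (fun _ ↦ zero_le) hX
  simpa using ENNReal.Tendsto.mul_const h (Or.inr hK)

theorem no_vanishing_general
    (n : ℕ) (hn : 1 ≤ n) (p q : ℝ) (hp : 1 < p) (hpq : p < q)
    (hq_sub : p < n → q < n * p / (n - p))
    (u : ℕ → (Fin n → ℝ) → ℝ)
    (hu_diff : ∀ j, Differentiable ℝ (u j))
    (hu_W : ∀ j, Integrable (fun x => ‖fderiv ℝ (u j) x‖ ^ p + |u j x| ^ p))
    (hbdd : ∃ M : ℝ, ∀ j, (∫ x, (‖fderiv ℝ (u j) x‖ ^ p + |u j x| ^ p)) ≤ M)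
    (ω : Set (Fin n → ℝ))
    (ρ : ℝ) (hρ : 0 < ρ)
    (hvanish : Tendsto (fun j => ⨆ x ∈ ω, ∫ y in ball x ρ, |u j y| ^ q) atTop (nhds 0)) :
    Tendsto (fun j => ∫ x in ω, |u j x| ^ q) atTop (nhds 0) := by
  obtain ⟨M, hM⟩ := hbdd
  have hq : 0 < q := by linarith
  have hS : ∀ j, ∫⁻ x, sobolevIntegrand p (u j) x ≤ ENNReal.ofReal M := fun j ↦ by
    rw [← ofReal_integral_eq_lintegral_sobolevIntegrand (by linarith) (hu_W j)]
    exact ENNReal.ofReal_le_ofReal (hM j)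
  obtain ⟨C, hC, hloc⟩ := exists_lintegral_ball_rpow_le_sobolevIntegrand (ι := Fin n) (F := ℝ)
    (by simpa using hn) hp hpq (by simpa using hq_sub) (half_pos hρ) (half_lt_self hρ)
  obtain ⟨C', hC', hloc'⟩ := exists_lintegral_ball_rpow_le_sobolevIntegrand (ι := Fin n) (F := ℝ)
    (by simpa using hn) hp hpq (by simpa using hq_sub) hρ (lt_two_mul_self hρ)
  have hsmall (j : ℕ) {x} (hx : x ∈ ω) : ∫⁻ y in ball x ρ, ‖u j y‖ₑ ^ q ≤
      ENNReal.ofReal (⨆ x ∈ ω, ∫ y in ball x ρ, |u j y| ^ q) :=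
    setLIntegral_enorm_rpow_le_ofReal_iSup (hu_diff j).continuous.aestronglyMeasurable hq.le
      (B := C' * ENNReal.ofReal M ^ (q / p)) (by finiteness) (fun x ↦ (hloc' _ (hu_diff j) x).trans
        (by gcongr; exact (setLIntegral_le_lintegral _ _).trans (hS j))) hx
  set K := C ^ (p / q) * (volume (ball (0 : Fin n → ℝ) ρ) / volume (ball (0 : Fin n → ℝ) (ρ / 2))) *
    ENNReal.ofReal M with hK
  have hmass (j : ℕ) : ∫⁻ x in ω, ‖u j x‖ₑ ^ q ≤
      ENNReal.ofReal (⨆ x ∈ ω, ∫ y in ball x ρ, |u j y| ^ q) ^ (1 - p / q) * K := by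
    refine (setLIntegral_le_of_forall_ball (C := C) (R := ρ)
      ((hu_diff j).continuous.enorm.measurable.pow_const q)
      ((hu_diff j).continuous.measurable_sobolevIntegrand p) hρ (div_pos (by linarith) hq)
      ((div_le_one hq).2 hpq.le) (fun x hx ↦ hsmall j hx) fun x ↦ ?_).trans ?_
    · rw [inv_div]
      exact hloc _ (hu_diff j) x
    · rw [hK]
      gcongr
      exact hS j
  have hK_ne_top : K ≠ ⊤ := ENNReal.mul_ne_top (ENNReal.mul_ne_top (by finiteness)
    (ENNReal.div_ne_top measure_ball_lt_top.ne (measure_ball_pos _ _ (half_pos hρ)).ne'))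
      ENNReal.ofReal_ne_top
  refine Tendsto.congr (fun j ↦ (integral_abs_rpow_eq_toReal_lintegral
    (hu_diff j).continuous.aestronglyMeasurable hq.le).symm) ?_
  simpa [Function.comp_def] using (ENNReal.tendsto_toReal ENNReal.zero_ne_top).comp
    (ENNReal.tendsto_zero_of_le_ofReal_rpow_mul (sub_pos.2 ((div_lt_one hq).2 hpq)) hK_ne_top
      hvanish hmass)

/-- The 'no vanishing implies no mass' lemma: let `1 < p < q < p*`. If `(u_j)` is bounded
in `W^{1,p}(ℝⁿ)`, `ω ⊆ ℝⁿ` is open, and for some `ρ > 0` one has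
`sup_{x ∈ ω} ∫_{B(x,ρ)} |u_j|^q → 0`, then `∫_ω |u_j|^q → 0`. -/
theorem no_vanishing
    (n : ℕ) (hn : 1 ≤ n) (p q : ℝ) (hp : 1 < p) (hpq : p < q)
    (hq_sub : p < n → q < n * p / (n - p))
    (u : ℕ → (Fin n → ℝ) → ℝ)
    (hu_diff : ∀ j, Differentiable ℝ (u j))
    (hu_W : ∀ j, Integrable (fun x => ‖fderiv ℝ (u j) x‖ ^ p + |u j x| ^ p))
    (hu_Lq : ∀ j, Integrable (fun x => |u j x| ^ q))
    (hbdd : ∃ M : ℝ, ∀ j, (∫ x, (‖fderiv ℝ (u j) x‖ ^ p + |u j x| ^ p)) ≤ M)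
    (ω : Set (Fin n → ℝ)) (hω : IsOpen ω)
    (ρ : ℝ) (hρ : 0 < ρ)
    (hvanish : Tendsto (fun j => ⨆ x ∈ ω, ∫ y in ball x ρ, |u j y| ^ q) atTop (nhds 0)) :
    Tendsto (fun j => ∫ x in ω, |u j x| ^ q) atTop (nhds 0) :=
  no_vanishing_general n hn p q hp hpq hq_sub u hu_diff hu_W hbdd ω ρ hρ hvanish
end

section
/- For n = 2 and the weighted radial norms, there is a constant C > 0 such that for every R ≥ 1 and every u ∈ W^{1,2}((R,∞), r dr) one has ∫_R^∞ r|u(r)|^4 dr ≤ C·((R+1)/R²)·(∫_R^∞ r(|u(r)|² + |u'(r)|²) dr)². -/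
/-!
Strauss-type argument. Writing `E = ∫_R^∞ r (u² + u'²) dr`, the square `u²` is integrable with
integrable derivative `2 u u'`, so it vanishes at infinity and `u(a)² = -∫_a^∞ 2 u u'`. Since
`2 |u u'| ≤ u² + u'² ≤ (r / R) (u² + u'²)` for `r ≥ R`, this gives the pointwise bound
`u(a)² ≤ E / R` on `(R, ∞)`. Hence `∫ r u⁴ ≤ (E / R) ∫ r u² ≤ E² / R ≤ ((R + 1) / R²) E²`.
-/

open MeasureTheory Set Filter

theorem eq_neg_integral_Ioi_of_hasDerivAt_of_integrableOn {f f' : ℝ → ℝ} {a : ℝ}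
    (hderiv : ∀ x ∈ Ici a, HasDerivAt f (f' x) x) (hf' : IntegrableOn f' (Ioi a))
    (hf : IntegrableOn f (Ioi a)) :
    f a = -∫ x in Ioi a, f' x := by
  have hlim := tendsto_zero_of_hasDerivAt_of_integrableOn_Ioi
    (fun x hx => hderiv x (mem_Ici_of_Ioi hx)) hf' hf
  rw [integral_Ioi_of_hasDerivAt_of_tendsto' hderiv hf' hlim]
  ring

theorem le_mul_div_of_le {R r q : ℝ} (hR : 0 < R) (hr : R ≤ r) (hq : 0 ≤ q) :
    q ≤ r * q / R := by
  rw [le_div_iff₀ hR, mul_comm r]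
  exact mul_le_mul_of_nonneg_left hr hq

theorem sq_le_mul_add_sq_div {R r : ℝ} (hR : 0 < R) (hr : R ≤ r) (x y : ℝ) :
    x ^ 2 ≤ r * (|x| ^ 2 + |y| ^ 2) / R := by
  refine le_trans ?_ (le_mul_div_of_le hR hr (by positivity))
  rw [sq_abs]
  nlinarith [sq_nonneg |y|]

theorem abs_two_mul_mul_le_mul_add_sq_div {R r : ℝ} (hR : 0 < R) (hr : R ≤ r) (x y : ℝ) :
    |2 * x * y| ≤ r * (|x| ^ 2 + |y| ^ 2) / R := by
  refine le_trans ?_ (le_mul_div_of_le hR hr (by positivity))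
  rw [abs_mul, abs_mul, abs_two]
  exact two_mul_le_add_sq _ _

section RadialEnergy

variable {u : ℝ → ℝ} {R : ℝ}

theorem integrableOn_of_abs_le_radialEnergy_div
    (hE : IntegrableOn (fun r => r * (|u r| ^ 2 + |deriv u r| ^ 2)) (Ioi R)) {g : ℝ → ℝ}
    (hg : AEStronglyMeasurable g (volume.restrict (Ioi R)))
    (hle : ∀ r ∈ Ioi R, |g r| ≤ r * (|u r| ^ 2 + |deriv u r| ^ 2) / R) :
    IntegrableOn g (Ioi R) :=
  Integrable.mono' (hE.div_const R) hg <|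
    (ae_restrict_iff' measurableSet_Ioi).2 (ae_of_all _ hle)

theorem sq_le_integral_radialEnergy_div (hR : 0 < R) (hu : DifferentiableOn ℝ u (Ioi R))
    (hE : IntegrableOn (fun r => r * (|u r| ^ 2 + |deriv u r| ^ 2)) (Ioi R))
    {a : ℝ} (ha : R < a) :
    u a ^ 2 ≤ (∫ r in Ioi R, r * (|u r| ^ 2 + |deriv u r| ^ 2)) / R := by
  have hderiv : ∀ x ∈ Ioi R, HasDerivAt (fun s => u s ^ 2) (2 * u x * deriv u x) x := by
    intro x hx
    have hux := ((hu x hx).differentiableAt (Ioi_mem_nhds hx)).hasDerivAt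
    simpa using hux.fun_pow 2
  have hum : AEStronglyMeasurable u (volume.restrict (Ioi R)) :=
    hu.continuousOn.aestronglyMeasurable measurableSet_Ioi
  have hsq : IntegrableOn (fun s => u s ^ 2) (Ioi R) :=
    integrableOn_of_abs_le_radialEnergy_div hE (hum.pow 2) fun r hr => by
      rw [abs_of_nonneg (sq_nonneg _)]
      exact sq_le_mul_add_sq_div hR (le_of_lt hr) _ _
  have huu' : IntegrableOn (fun s => 2 * u s * deriv u s) (Ioi R) :=
    integrableOn_of_abs_le_radialEnergy_div hE
      ((hum.const_mul 2).mul (measurable_deriv u).aestronglyMeasurable) fun r hr =>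
        abs_two_mul_mul_le_mul_add_sq_div hR (le_of_lt hr) _ _
  have hsub : Ioi a ⊆ Ioi R := Ioi_subset_Ioi ha.le
  calc u a ^ 2 = -∫ s in Ioi a, 2 * u s * deriv u s :=
        eq_neg_integral_Ioi_of_hasDerivAt_of_integrableOn
          (fun x hx => hderiv x (ha.trans_le hx)) (huu'.mono_set hsub) (hsq.mono_set hsub)
    _ ≤ ∫ s in Ioi a, |2 * u s * deriv u s| :=
        (neg_le_abs _).trans (abs_integral_le_integral_abs)
    _ ≤ ∫ s in Ioi a, s * (|u s| ^ 2 + |deriv u s| ^ 2) / R :=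
        setIntegral_mono_on (huu'.mono_set hsub).abs ((hE.mono_set hsub).div_const R)
          measurableSet_Ioi fun s hs =>
            abs_two_mul_mul_le_mul_add_sq_div hR (ha.trans hs).le _ _
    _ ≤ ∫ s in Ioi R, s * (|u s| ^ 2 + |deriv u s| ^ 2) / R :=
        setIntegral_mono_set (hE.div_const R)
          ((ae_restrict_iff' measurableSet_Ioi).2 (ae_of_all _ fun s hs =>
            div_nonneg (mul_nonneg (hR.trans hs).le (by positivity)) hR.le))
          hsub.eventuallyLE
    _ = (∫ r in Ioi R, r * (|u r| ^ 2 + |deriv u r| ^ 2)) / R := integral_div _ _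

theorem integral_mul_abs_pow_four_le (hR : 0 < R) (hu : DifferentiableOn ℝ u (Ioi R))
    (hE : IntegrableOn (fun r => r * (|u r| ^ 2 + |deriv u r| ^ 2)) (Ioi R))
    (h4 : IntegrableOn (fun r => r * |u r| ^ 4) (Ioi R)) :
    ∫ r in Ioi R, r * |u r| ^ 4
      ≤ (∫ r in Ioi R, r * (|u r| ^ 2 + |deriv u r| ^ 2)) ^ 2 / R := by
  set E := ∫ r in Ioi R, r * (|u r| ^ 2 + |deriv u r| ^ 2)
  have hE0 : 0 ≤ E := setIntegral_nonneg measurableSet_Ioi fun r hr =>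
    mul_nonneg (hR.trans hr).le (by positivity)
  calc ∫ r in Ioi R, r * |u r| ^ 4
      ≤ ∫ r in Ioi R, E / R * (r * (|u r| ^ 2 + |deriv u r| ^ 2)) :=
        setIntegral_mono_on h4 (hE.const_mul _) measurableSet_Ioi fun r hr => by
          have hsup : |u r| ^ 2 ≤ E / R :=
            (sq_abs _).trans_le (sq_le_integral_radialEnergy_div hR hu hE hr)
          have hr0 : 0 ≤ r := (hR.trans hr).le
          calc r * |u r| ^ 4 = |u r| ^ 2 * (r * |u r| ^ 2) := by ring
            _ ≤ E / R * (r * (|u r| ^ 2 + |deriv u r| ^ 2)) := by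
              gcongr
              exact le_add_of_nonneg_right (sq_nonneg _)
    _ = E ^ 2 / R := by
        rw [integral_const_mul]
        ring

end RadialEnergy

/-- Weighted radial tail estimate in dimension 2: there is `C > 0` such that for every
`R ≥ 1` and every `u ∈ W^{1,2}((R,∞), r dr)`,
`∫_R^∞ r |u|⁴ dr ≤ C ((R+1)/R²) (∫_R^∞ r (|u|² + |u'|²) dr)²`. -/
theorem radial_tail_estimate :
    ∃ C : ℝ, 0 < C ∧ ∀ (R : ℝ), 1 ≤ R → ∀ (u : ℝ → ℝ),
      DifferentiableOn ℝ u (Ioi R) →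
      IntegrableOn (fun r => r * (|u r| ^ 2 + |deriv u r| ^ 2)) (Ioi R) →
      IntegrableOn (fun r => r * |u r| ^ 4) (Ioi R) →
      (∫ r in Ioi R, r * |u r| ^ 4)
        ≤ C * ((R + 1) / R ^ 2) * (∫ r in Ioi R, r * (|u r| ^ 2 + |deriv u r| ^ 2)) ^ 2 := by
  refine ⟨1, one_pos, fun R hR u hu hE h4 => ?_⟩
  have hR0 : 0 < R := one_pos.trans_le hR
  refine (integral_mul_abs_pow_four_le hR0 hu hE h4).trans ?_
  rw [one_mul, div_eq_inv_mul]
  gcongr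
  rw [inv_eq_one_div, div_le_div_iff₀ hR0 (by positivity)]
  nlinarith
end

section
/- Let 1 < p, n ≥ 1, and let σ_R be Lipschitz cutoff functions on ℝⁿ with 0 ≤ σ_R ≤ 1, |∇σ_R| ≤ 12/(ρ'(R) − ρ), and ∇σ_R supported in the annulus {ρ ≤ |x − x_R| ≤ ρ'(R)} where ρ'(R) → ∞. If q < p* and u_R is bounded in W^{1,p} and normalized in L^q, then ‖|u_R|·|∇σ_R|‖_{L^p}^p ≤ C·(ρ'(R))^{n − np/q}·(ρ'(R) − ρ)^{−p}·‖u_R‖_{L^q}^p → 0 as R → ∞. -/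
/-!
Off the annulus the gradient of `σ_R` vanishes, so the integrand lives on the ball
`B(x_R, ρ'(R))`, where it is at most `(12 / (ρ'(R) - ρ))^p |u_R|^p`. Hölder's inequality with
exponents `q/p` and `q/(q-p)` on that ball gives `∫_B |u|^p ≤ |B|^(1 - p/q) ‖u‖_q^p`, and
`|B| = (2 ρ'(R))^n` since balls of `Fin n → ℝ` are sup-norm cubes. The resulting rate
`ρ'^(n - np/q) (ρ' - ρ)^(-p)` behaves like `ρ'^(n - np/q - p)`, whose exponent is negative
exactly because `q < p* = np/(n-p)` (or `p ≥ n`).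
-/

open MeasureTheory Filter Metric Set Function
open scoped ENNReal Topology

namespace MeasureTheory

variable {α : Type*} [MeasurableSpace α] {μ : Measure α}

theorem lintegral_enorm_rpow_le_measure_univ_mul {ε : Type*} [TopologicalSpace ε]
    [ContinuousENorm ε] {f : α → ε} {p q : ℝ} (hp : 0 < p) (hpq : p ≤ q)
    (hf : AEStronglyMeasurable f μ) :
    ∫⁻ x, ‖f x‖ₑ ^ p ∂μ ≤ μ univ ^ (1 - p / q) * (∫⁻ x, ‖f x‖ₑ ^ q ∂μ) ^ (p / q) := by
  have h := ENNReal.rpow_le_rpow (eLpNorm'_le_eLpNorm'_mul_rpow_measure_univ hp hpq hf) hp.le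
  rwa [eLpNorm'_eq_lintegral_enorm, eLpNorm'_eq_lintegral_enorm,
    ENNReal.mul_rpow_of_nonneg _ _ hp.le, ← ENNReal.rpow_mul, ← ENNReal.rpow_mul,
    ← ENNReal.rpow_mul, one_div_mul_cancel hp.ne', ENNReal.rpow_one, one_div_mul_eq_div,
    sub_mul, one_div_mul_cancel hp.ne', one_div_mul_eq_div, mul_comm] at h

theorem integral_abs_rpow_mul_norm_rpow_le {E : Type*} [NormedAddCommGroup E]
    {u : α → ℝ} {g : α → E} {s : Set α} {b p q : ℝ}
    (hs : MeasurableSet s) (hμs : μ s ≠ ∞) (hp : 0 < p) (hpq : p ≤ q) (hb : 0 ≤ b)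
    (hu : AEStronglyMeasurable u μ) (huq : Integrable (fun x => |u x| ^ q) μ)
    (hg : ∀ x, ‖g x‖ ≤ b) (hgs : support g ⊆ s) :
    ∫ x, |u x| ^ p * ‖g x‖ ^ p ∂μ
      ≤ b ^ p * μ.real s ^ (1 - p / q) * (∫ x, |u x| ^ q ∂μ) ^ (p / q) := by
  have hq : 0 < q := hp.trans_le hpq
  have hexp : 0 ≤ 1 - p / q := sub_nonneg.2 ((div_le_one hq).2 hpq)
  have hpointwise : ∀ x, ENNReal.ofReal (|u x| ^ p * ‖g x‖ ^ p)
      ≤ s.indicator (fun x => ENNReal.ofReal (b ^ p) * ‖u x‖ₑ ^ p) x := by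
    intro x
    by_cases hx : x ∈ s
    · rw [indicator_of_mem hx, Real.enorm_eq_ofReal_abs, ENNReal.ofReal_rpow_of_nonneg
        (abs_nonneg _) hp.le, ← ENNReal.ofReal_mul (by positivity), mul_comm]
      gcongr
      exact hg x
    · rw [indicator_of_notMem hx, notMem_support.1 (fun h => hx (hgs h)), norm_zero,
        Real.zero_rpow hp.ne', mul_zero, ENNReal.ofReal_zero]
  have hLq : ∫⁻ x, ‖u x‖ₑ ^ q ∂μ = ENNReal.ofReal (∫ x, |u x| ^ q ∂μ) := by
    rw [ofReal_integral_eq_lintegral_ofReal huq (Eventually.of_forall fun x => by positivity)]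
    simp only [Real.enorm_eq_ofReal_abs, ENNReal.ofReal_rpow_of_nonneg (abs_nonneg _) hq.le]
  have hlintegral : ∫⁻ x, ENNReal.ofReal (|u x| ^ p * ‖g x‖ ^ p) ∂μ
      ≤ ENNReal.ofReal (b ^ p * μ.real s ^ (1 - p / q) * (∫ x, |u x| ^ q ∂μ) ^ (p / q)) :=
    calc ∫⁻ x, ENNReal.ofReal (|u x| ^ p * ‖g x‖ ^ p) ∂μ
        ≤ ∫⁻ x in s, ENNReal.ofReal (b ^ p) * ‖u x‖ₑ ^ p ∂μ :=
          (lintegral_mono hpointwise).trans_eq (lintegral_indicator hs _)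
      _ = ENNReal.ofReal (b ^ p) * ∫⁻ x in s, ‖u x‖ₑ ^ p ∂μ :=
          lintegral_const_mul' _ _ ENNReal.ofReal_ne_top
      _ ≤ ENNReal.ofReal (b ^ p)
            * (μ s ^ (1 - p / q) * (∫⁻ x in s, ‖u x‖ₑ ^ q ∂μ) ^ (p / q)) := by
          grw [lintegral_enorm_rpow_le_measure_univ_mul hp hpq hu.restrict,
            Measure.restrict_apply_univ]
      _ ≤ ENNReal.ofReal (b ^ p) * (μ s ^ (1 - p / q) * (∫⁻ x, ‖u x‖ₑ ^ q ∂μ) ^ (p / q)) := by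
          gcongr
          exact Measure.restrict_le_self
      _ = _ := by
          rw [hLq, ← ofReal_measureReal hμs,
            ENNReal.ofReal_rpow_of_nonneg measureReal_nonneg hexp,
            ENNReal.ofReal_rpow_of_nonneg (integral_nonneg fun x => by positivity) (by positivity),
            ← ENNReal.ofReal_mul (by positivity), ← ENNReal.ofReal_mul (by positivity),
            mul_assoc]
  calc ∫ x, |u x| ^ p * ‖g x‖ ^ p ∂μ ≤ ‖∫ x, |u x| ^ p * ‖g x‖ ^ p ∂μ‖ := Real.le_norm_self _
    _ ≤ (∫⁻ x, ENNReal.ofReal ‖|u x| ^ p * ‖g x‖ ^ p‖ ∂μ).toReal :=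
      norm_integral_le_lintegral_norm _
    _ ≤ _ := by
      have hnorm (x : α) : ‖|u x| ^ p * ‖g x‖ ^ p‖ = |u x| ^ p * ‖g x‖ ^ p :=
        Real.norm_of_nonneg (by positivity)
      simp only [hnorm]
      exact ENNReal.toReal_le_of_le_ofReal (by positivity) hlintegral

end MeasureTheory

theorem sub_mul_div_lt_of_lt_sobolev {n p q : ℝ} (hn : 0 ≤ n) (hp : 0 < p) (hq : 0 < q)
    (hq_sub : p < n → q < n * p / (n - p)) : n - n * p / q < p := by
  by_cases hpn : p < n
  · have hnp : 0 < n - p := sub_pos.2 hpn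
    have h : q * (n - p) < n * p := (lt_div_iff₀ hnp).1 (hq_sub hpn)
    have : n - p < n * p / q := by rw [lt_div_iff₀ hq]; linarith
    linarith
  · rcases hn.eq_or_lt with rfl | hn
    · simpa using hp
    · have : 0 < n * p / q := by positivity
      linarith [not_lt.1 hpn]

theorem tendsto_rpow_mul_sub_rpow_neg_atTop {a p ρ : ℝ} (hap : a < p) :
    Tendsto (fun t : ℝ => t ^ a * (t - ρ) ^ (-p)) atTop (𝓝 0) := by
  have hdecay : Tendsto (fun t : ℝ => t ^ (a - p)) atTop (𝓝 0) := by
    simpa using tendsto_rpow_neg_atTop (sub_pos.2 hap)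
  have hratio : Tendsto (fun t : ℝ => ((t - ρ) / t) ^ (-p)) atTop (𝓝 1) := by
    have h : Tendsto (fun t : ℝ => 1 - ρ / t) atTop (𝓝 1) := by
      simpa using (tendsto_const_nhds (x := (1 : ℝ))).sub
        ((tendsto_const_nhds (x := ρ)).div_atTop tendsto_id)
    simpa using (h.rpow_const (Or.inl one_ne_zero)).congr'
      ((eventually_ne_atTop 0).mono fun t ht => by rw [sub_div, div_self ht])
  refine Tendsto.congr' ?_ (by simpa using hdecay.mul hratio)
  filter_upwards [eventually_gt_atTop (max ρ 0)] with t ht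
  have ht0 : 0 < t := (le_max_right _ _).trans_lt ht
  have htρ : 0 ≤ t - ρ := sub_nonneg.2 ((le_max_left _ _).trans ht.le)
  rw [Real.div_rpow htρ ht0.le, Real.rpow_sub ht0, Real.rpow_neg ht0.le]
  field_simp

theorem Real.volume_real_pi_closedBall {ι : Type*} [Fintype ι] (a : ι → ℝ) {r : ℝ}
    (hr : 0 ≤ r) :
    volume.real (closedBall a r) = (2 * r) ^ Fintype.card ι := by
  rw [measureReal_def, Real.volume_pi_closedBall a hr, ENNReal.toReal_ofReal (by positivity)]

theorem cutoff_gradient_estimate_general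
    (n : ℕ) (p q : ℝ) (hp : 1 < p) (hpq : p < q)
    (hq_sub : p < n → q < n * p / (n - p))
    (ρ : ℝ) (hρ : 0 < ρ) (ρ' : ℕ → ℝ) (hρ' : Tendsto ρ' atTop atTop)
    (hρ'ρ : ∀ R, ρ < ρ' R)
    (x : ℕ → (Fin n → ℝ))
    (σ : ℕ → (Fin n → ℝ) → ℝ)
    (hσ_grad : ∀ R y, ‖fderiv ℝ (σ R) y‖ ≤ 12 / (ρ' R - ρ))
    (hσ_supp : ∀ R, support (fun y => fderiv ℝ (σ R) y)
      ⊆ {y | ρ ≤ dist y (x R) ∧ dist y (x R) ≤ ρ' R})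
    (u : ℕ → (Fin n → ℝ) → ℝ)
    (hu_meas : ∀ R, Measurable (u R))
    (hu_Lq : ∀ R, Integrable (fun y => |u R y| ^ q))
    (hu_norm : ∀ R, (∫ y, |u R y| ^ q) = 1) :
    ∃ C : ℝ, 0 < C ∧
      (∀ R, (∫ y, |u R y| ^ p * ‖fderiv ℝ (σ R) y‖ ^ p)
        ≤ C * (ρ' R) ^ ((n : ℝ) - n * p / q) * (ρ' R - ρ) ^ (-p)
            * (∫ y, |u R y| ^ q) ^ (p / q)) ∧
      Tendsto (fun R => ∫ y, |u R y| ^ p * ‖fderiv ℝ (σ R) y‖ ^ p) atTop (nhds 0) := by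
  have hp0 : 0 < p := one_pos.trans hp
  set e : ℝ := n - n * p / q
  set C : ℝ := 12 ^ p * 2 ^ e
  have hbound (R : ℕ) : ∫ y, |u R y| ^ p * ‖fderiv ℝ (σ R) y‖ ^ p
      ≤ C * ρ' R ^ e * (ρ' R - ρ) ^ (-p) * (∫ y, |u R y| ^ q) ^ (p / q) := by
    have hρ'R : 0 ≤ ρ' R := hρ.le.trans (hρ'ρ R).le
    have hgap : 0 < ρ' R - ρ := sub_pos.2 (hρ'ρ R)
    have hvol : volume.real (closedBall (x R) (ρ' R)) ^ (1 - p / q) = 2 ^ e * ρ' R ^ e := by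
      rw [Real.volume_real_pi_closedBall _ hρ'R, Fintype.card_fin, ← Real.rpow_natCast_mul
        (by positivity), Real.mul_rpow zero_le_two hρ'R, mul_one_sub, ← mul_div_assoc]
    have h := integral_abs_rpow_mul_norm_rpow_le (s := closedBall (x R) (ρ' R))
      measurableSet_closedBall measure_closedBall_lt_top.ne hp0 hpq.le (by positivity)
      (hu_meas R).aestronglyMeasurable (hu_Lq R) (hσ_grad R)
      (fun y hy => mem_closedBall.2 (hσ_supp R hy).2)
    rw [hvol, Real.div_rpow (by norm_num) hgap.le] at h
    rw [Real.rpow_neg hgap.le]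
    exact h.trans_eq (by ring)
  have hdecay : Tendsto (fun R => C * (ρ' R ^ e * (ρ' R - ρ) ^ (-p))) atTop (𝓝 0) := by
    have hexp : e < p := sub_mul_div_lt_of_lt_sobolev n.cast_nonneg hp0 (hp0.trans hpq) hq_sub
    simpa using ((tendsto_rpow_mul_sub_rpow_neg_atTop hexp).comp hρ').const_mul C
  refine ⟨C, by positivity, hbound, squeeze_zero (fun R => integral_nonneg fun y => by positivity)
    (fun R => ?_) hdecay⟩
  simpa [hu_norm R, mul_assoc] using hbound R

/-- The cut-off gradient estimate: if `σ_R` are Lipschitz cut-offs with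
`0 ≤ σ_R ≤ 1`, `|∇σ_R| ≤ 12/(ρ'(R) - ρ)`, `∇σ_R` supported in the annulus
`{ρ ≤ |x - x_R| ≤ ρ'(R)}` with `ρ'(R) → ∞`, and `u_R` is normalized in `L^q` with
`q < p*`, then `∫ |u_R|^p |∇σ_R|^p ≤ C (ρ'(R))^{n - np/q} (ρ'(R) - ρ)^{-p} (∫|u_R|^q)^{p/q}`
and this quantity tends to `0`. -/
theorem cutoff_gradient_estimate
    (n : ℕ) (hn : 1 ≤ n) (p q : ℝ) (hp : 1 < p) (hpq : p < q)
    (hq_sub : p < n → q < n * p / (n - p))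
    (ρ : ℝ) (hρ : 0 < ρ) (ρ' : ℕ → ℝ) (hρ' : Tendsto ρ' atTop atTop)
    (hρ'ρ : ∀ R, ρ < ρ' R)
    (x : ℕ → (Fin n → ℝ))
    (σ : ℕ → (Fin n → ℝ) → ℝ)
    (hσ_diff : ∀ R, Differentiable ℝ (σ R))
    (hσ01 : ∀ R y, σ R y ∈ Set.Icc (0 : ℝ) 1)
    (hσ_grad : ∀ R y, ‖fderiv ℝ (σ R) y‖ ≤ 12 / (ρ' R - ρ))
    (hσ_supp : ∀ R, support (fun y => fderiv ℝ (σ R) y)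
      ⊆ {y | ρ ≤ dist y (x R) ∧ dist y (x R) ≤ ρ' R})
    (u : ℕ → (Fin n → ℝ) → ℝ)
    (hu_meas : ∀ R, Measurable (u R))
    (hu_Lq : ∀ R, Integrable (fun y => |u R y| ^ q))
    (hu_norm : ∀ R, (∫ y, |u R y| ^ q) = 1) :
    ∃ C : ℝ, 0 < C ∧
      (∀ R, (∫ y, |u R y| ^ p * ‖fderiv ℝ (σ R) y‖ ^ p)
        ≤ C * (ρ' R) ^ ((n : ℝ) - n * p / q) * (ρ' R - ρ) ^ (-p)
            * (∫ y, |u R y| ^ q) ^ (p / q)) ∧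
      Tendsto (fun R => ∫ y, |u R y| ^ p * ‖fderiv ℝ (σ R) y‖ ^ p) atTop (nhds 0) :=
  cutoff_gradient_estimate_general n p q hp hpq hq_sub ρ hρ ρ' hρ' hρ'ρ x σ hσ_grad hσ_supp u
    hu_meas hu_Lq hu_norm
end

section
/- For λ > 0, the function r(x) = −2λ/(e^{λx} + (3/2)e^{−λx}) satisfies the ODE r'' − λ²r + 3r³ = 0 on ℝ, and r(x) → 0 as x → ±∞. -/
open Real Filter

/-!
Write `r = k / E` with `E x = e^{λx} + c e^{-λx}`. Differentiating swaps the sign of `c`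
and brings out a factor `λ`, so `E'' = λ² E`, while `E² - (E'/λ)² = 4c` is constant.
The quotient rule then gives `r'' = λ² r - 8cλ² k / E³`, which for `k = -2λ`, `c = 3/2` is
`λ² r - 3 r³`. Since `E → ∞` at both ends, `r → 0`.
-/

noncomputable def expCombo (lam c x : ℝ) : ℝ :=
  exp (lam * x) + c * exp (-(lam * x))

namespace expCombo

variable {lam c : ℝ}

theorem pos (hc : 0 ≤ c) (x : ℝ) : 0 < expCombo lam c x := by
  unfold expCombo
  positivity

theorem hasDerivAt (x : ℝ) :
    HasDerivAt (expCombo lam c) (lam * expCombo lam (-c) x) x := by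
  have hlin : HasDerivAt (fun x => lam * x) lam x := by
    simpa using (hasDerivAt_id x).const_mul lam
  exact (hlin.exp.fun_add (hlin.fun_neg.exp.const_mul c)).congr_deriv
    (by simp only [expCombo]; ring)

theorem sq_sub_sq_neg (x : ℝ) :
    expCombo lam c x ^ 2 - expCombo lam (-c) x ^ 2 = 4 * c := by
  have h : exp (lam * x) * exp (-(lam * x)) = 1 := by rw [← exp_add]; simp
  unfold expCombo
  linear_combination 4 * c * h

theorem tendsto_atTop (hlam : 0 < lam) : Tendsto (expCombo lam c) atTop atTop := by
  have hlin : Tendsto (fun x => lam * x) atTop atTop := tendsto_id.const_mul_atTop hlam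
  have hdecay : Tendsto (fun x => c * exp (-(lam * x))) atTop (nhds 0) := by
    simpa using (tendsto_exp_comp_nhds_zero.2 (tendsto_neg_atTop_atBot.comp hlin)).const_mul c
  exact (tendsto_exp_comp_atTop.2 hlin).atTop_add hdecay

theorem tendsto_atBot (hlam : 0 < lam) (hc : 0 < c) :
    Tendsto (expCombo lam c) atBot atTop := by
  have hlin : Tendsto (fun x => lam * x) atBot atBot := tendsto_id.const_mul_atBot hlam
  exact (tendsto_exp_comp_nhds_zero.2 hlin).add_atTop
    ((tendsto_exp_comp_atTop.2 (tendsto_neg_atBot_atTop.comp hlin)).const_mul_atTop hc)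

end expCombo

section Quotient

variable {lam c : ℝ} (k : ℝ)

theorem hasDerivAt_div_expCombo {x : ℝ} (hx : expCombo lam c x ≠ 0) :
    HasDerivAt (fun x => k / expCombo lam c x)
      (-(k * lam * expCombo lam (-c) x) / expCombo lam c x ^ 2) x :=
  ((hasDerivAt_const x k).fun_div (expCombo.hasDerivAt x) hx).congr_deriv (by ring)

theorem deriv_deriv_div_expCombo (hE : ∀ x, expCombo lam c x ≠ 0) (x : ℝ) :
    deriv (deriv fun x => k / expCombo lam c x) x =
      lam ^ 2 * (k / expCombo lam c x) - 8 * c * lam ^ 2 * k / expCombo lam c x ^ 3 := by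
  have hderiv : deriv (fun x => k / expCombo lam c x) =
      fun x => -(k * lam * expCombo lam (-c) x) / expCombo lam c x ^ 2 :=
    funext fun x => (hasDerivAt_div_expCombo k (hE x)).deriv
  have hnum : HasDerivAt (fun x => -(k * lam * expCombo lam (-c) x))
      (-(k * lam * (lam * expCombo lam c x))) x := by
    simpa using ((expCombo.hasDerivAt (c := -c) x).const_mul (k * lam)).fun_neg
  have hden : HasDerivAt (fun x => expCombo lam c x ^ 2)
      (2 * expCombo lam c x * (lam * expCombo lam (-c) x)) x := by
    simpa [mul_assoc] using (expCombo.hasDerivAt x).fun_pow 2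
  rw [hderiv, (hnum.fun_div hden (pow_ne_zero 2 (hE x))).deriv]
  have hconst := expCombo.sq_sub_sq_neg (lam := lam) (c := c) x
  field_simp [hE x]
  linear_combination -2 * k * lam ^ 2 * hconst

end Quotient

/-- For `λ > 0`, the function `r(x) = -2λ / (e^{λx} + (3/2) e^{-λx})` satisfies
`r'' - λ² r + 3 r³ = 0` on `ℝ`, and `r(x) → 0` as `x → ±∞`. -/
theorem homoclinic_orbit_explicit (lam : ℝ) (hlam : 0 < lam) :
    let r : ℝ → ℝ := fun x => -2 * lam / (Real.exp (lam * x) + (3 / 2) * Real.exp (-(lam * x)))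
    (∀ x : ℝ, deriv (deriv r) x - lam ^ 2 * r x + 3 * (r x) ^ 3 = 0) ∧
    Tendsto r atTop (nhds 0) ∧ Tendsto r atBot (nhds 0) := by
  intro r
  have hr : r = fun x => -2 * lam / expCombo lam (3 / 2) x := rfl
  have hE : ∀ x, expCombo lam (3 / 2) x ≠ 0 := fun x => (expCombo.pos (by norm_num) x).ne'
  refine ⟨fun x => ?_, ?_, ?_⟩
  · rw [hr, deriv_deriv_div_expCombo _ hE]
    field_simp [hE x]
    ring
  · exact tendsto_const_nhds.div_atTop (expCombo.tendsto_atTop hlam)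
  · exact tendsto_const_nhds.div_atTop (expCombo.tendsto_atBot hlam (by norm_num))
end
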